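/- arXiv:2011.10984 — 2 statements merged into one kernel-verified Lean document; each statement's English description precedes it below -/
import Mathlib

section
/- The set of all closed classes of graphs has the cardinality of the continuum. -/
/-- A finite multigraph: vertices, edges, and an endpoint map assigning to each
edge an unordered pair of vertices (loops and parallel edges allowed). -/
structure MultiGraph where
  V : Type
  E : Type
  [fintV : Fintype V]
  [fintE : Fintype E]
  [decV : DecidableEq V]
  ends : E → Sym2 V

attribute [instance] MultiGraph.fintV MultiGraph.fintE MultiGraph.decV

/-- An embedding of the multigraph `G` into the multigraph `H` (a subgraph copy). -/
structure Emb (G H : MultiGraph) where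
  vmap : G.V → H.V
  emap : G.E → H.E
  vinj : Function.Injective vmap
  einj : Function.Injective emap
  ends_eq : ∀ e, H.ends (emap e) = (G.ends e).map vmap

/-- An isomorphism of multigraphs. -/
structure Iso (G H : MultiGraph) extends Emb G H where
  vsurj : Function.Surjective vmap
  esurj : Function.Surjective emap

/-- `GlueAt G G₁ G₂ Gt j₁ j₂ f₁ f₂` says that `G` is the result of a gluing
operation applied to `G₁` and `G₂`, identifying the copy `j₁` of `Gt` inside `G₁`
with the copy `j₂` of `Gt` inside `G₂`: `f₁`, `f₂` embed the operands into the
result, they agree exactly on the identified subgraph, and together they cover `G`. -/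
def GlueAt (G G₁ G₂ Gt : MultiGraph) (j₁ : Emb Gt G₁) (j₂ : Emb Gt G₂)
    (f₁ : Emb G₁ G) (f₂ : Emb G₂ G) : Prop :=
  (∀ x, f₁.vmap (j₁.vmap x) = f₂.vmap (j₂.vmap x)) ∧
  (∀ e, f₁.emap (j₁.emap e) = f₂.emap (j₂.emap e)) ∧
  (∀ v, (∃ a, f₁.vmap a = v) ∨ (∃ b, f₂.vmap b = v)) ∧
  (∀ e, (∃ a, f₁.emap a = e) ∨ (∃ b, f₂.emap b = e)) ∧
  (∀ a b, f₁.vmap a = f₂.vmap b → ∃ x, j₁.vmap x = a ∧ j₂.vmap x = b) ∧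
  (∀ a b, f₁.emap a = f₂.emap b → ∃ x, j₁.emap x = a ∧ j₂.emap x = b)

/-- `G` is a result of a gluing operation applied to `G₁` and `G₂` with gluing
subgraph `Gt`. -/
def IsGluing (G G₁ G₂ Gt : MultiGraph) : Prop :=
  ∃ (j₁ : Emb Gt G₁) (j₂ : Emb Gt G₂) (f₁ : Emb G₁ G) (f₂ : Emb G₂ G),
    GlueAt G G₁ G₂ Gt j₁ j₂ f₁ f₂

/-- A nontrivial gluing: neither identified subgraph is the whole operand. -/
def IsNontrivialGluing (G G₁ G₂ Gt : MultiGraph) : Prop :=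
  ∃ (j₁ : Emb Gt G₁) (j₂ : Emb Gt G₂) (f₁ : Emb G₁ G) (f₂ : Emb G₂ G),
    GlueAt G G₁ G₂ Gt j₁ j₂ f₁ f₂ ∧
    ¬ (Function.Surjective j₁.vmap ∧ Function.Surjective j₁.emap) ∧
    ¬ (Function.Surjective j₂.vmap ∧ Function.Surjective j₂.emap)

/-- `O n`: the empty (edgeless) graph on `n` vertices. -/
abbrev O (n : ℕ) : MultiGraph := { V := Fin n, E := Empty, ends := fun e => e.elim }

/-- `K₂`: a single edge on two vertices. -/
abbrev K2 : MultiGraph := { V := Fin 2, E := Fin 1, ends := fun _ => s((0 : Fin 2), (1 : Fin 2)) }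

/-- `CycleG n`: the simple cycle on `n` vertices (`CycleG 1` is a loop,
`CycleG 2` a pair of parallel edges). -/
def CycleG (n : ℕ) : MultiGraph :=
  { V := Fin n, E := Fin n,
    ends := fun e => s(e, ⟨(e.val + 1) % n, Nat.mod_lt _ e.pos⟩) }

/-- `C₁`: a single vertex with a loop. -/
abbrev C1 : MultiGraph := CycleG 1

/-- Number of occurrences of `v` among the two endpoints in an unordered pair. -/
def vcount {α : Type} [DecidableEq α] (v : α) : Sym2 α → ℕ :=
  Sym2.lift ⟨fun a b => (if a = v then 1 else 0) + (if b = v then 1 else 0),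
    fun _ _ => add_comm _ _⟩

/-- Degree of a vertex in a multigraph (a loop contributes 2). -/
def MultiGraph.degree (G : MultiGraph) (v : G.V) : ℕ := ∑ e : G.E, vcount v (G.ends e)

/-- Adjacency in a multigraph. -/
def MultiGraph.Adj (G : MultiGraph) (v w : G.V) : Prop := ∃ e, G.ends e = s(v, w)

/-- Connectivity of a multigraph. -/
def MultiGraph.Connected (G : MultiGraph) : Prop :=
  Nonempty G.V ∧ ∀ v w, Relation.ReflTransGen G.Adj v w

/-- A graph has a cycle iff it contains a subgraph isomorphic to some `CycleG n`,
`n ≥ 1` (this includes loops and pairs of parallel edges). -/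
def HasCycle (G : MultiGraph) : Prop := ∃ n, 1 ≤ n ∧ Nonempty (Emb (CycleG n) G)

/-- A Hamiltonian graph: it contains a spanning cycle. -/
def Hamiltonian (G : MultiGraph) : Prop :=
  ∃ n, 1 ≤ n ∧ ∃ f : Emb (CycleG n) G, Function.Surjective f.vmap

/-- The class of graphs constructible from (isomorphic copies of) graphs in `B`
by gluing operations whose gluing subgraphs lie in `T`. -/
inductive GeneratesW (B T : Set MultiGraph) : MultiGraph → Prop
  | base {H G : MultiGraph} : B H → Iso H G → GeneratesW B T G
  | glue {G G₁ G₂ Gt : MultiGraph} : GeneratesW B T G₁ → GeneratesW B T G₂ →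
      T Gt → IsGluing G G₁ G₂ Gt → GeneratesW B T G

/-- The closure of a set of graphs under arbitrary gluing operations. -/
def Generates (B : Set MultiGraph) : Set MultiGraph := {G | GeneratesW B Set.univ G}

/-- A class of graphs closed under isomorphism. -/
def IsoClosed (C : Set MultiGraph) : Prop := ∀ G H, G ∈ C → Iso G H → H ∈ C

/-- A closed class of graphs: closed under isomorphism and gluing operations. -/
def ClosedClass (C : Set MultiGraph) : Prop :=
  IsoClosed C ∧ ∀ G G₁ G₂ Gt, G₁ ∈ C → G₂ ∈ C → IsGluing G G₁ G₂ Gt → G ∈ C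

/-!
An isomorphism-closed class is determined by which of the countably many graphs with vertex set
`Fin n` and edge set `Fin m` it contains, so there are at most `𝔠` closed classes.

Conversely, for `S ⊆ ℕ` consider the nonempty graphs of minimum degree at least two that are not
cycles of length `k + 1` with `k ∉ S`. Embeddings do not lower degrees, so gluing preserves
minimum degree two. A graph of minimum degree two embedded in a cycle exhausts it, because every
cycle edge at a covered vertex must be covered; hence a cycle arises from a gluing only if it is
one of the operands. Thus this class is closed, and it contains the cycle of length `k + 1` iff
`k ∈ S`.
-/

open Function Cardinal

variable {G H K : MultiGraph}

def Emb.trans (f : Emb G H) (g : Emb H K) : Emb G K where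
  vmap := g.vmap ∘ f.vmap
  emap := g.emap ∘ f.emap
  vinj := g.vinj.comp f.vinj
  einj := g.einj.comp f.einj
  ends_eq e := by simp only [comp_apply, g.ends_eq, f.ends_eq, Sym2.map_map]

def Iso.refl (G : MultiGraph) : Iso G G where
  vmap := id
  emap := id
  vinj := injective_id
  einj := injective_id
  ends_eq _ := (congrFun Sym2.map_id _).symm
  vsurj := surjective_id
  esurj := surjective_id

def Iso.trans (f : Iso G H) (g : Iso H K) : Iso G K :=
  ⟨f.toEmb.trans g.toEmb, g.vsurj.comp f.vsurj, g.esurj.comp f.esurj⟩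

noncomputable def Iso.symm (f : Iso G H) : Iso H G :=
  let ev := Equiv.ofBijective f.vmap ⟨f.vinj, f.vsurj⟩
  let ee := Equiv.ofBijective f.emap ⟨f.einj, f.esurj⟩
  { vmap := ev.symm
    emap := ee.symm
    vinj := ev.symm.injective
    einj := ee.symm.injective
    ends_eq := fun e => by
      conv_rhs => rw [← ee.apply_symm_apply e]
      change _ = (H.ends (f.emap _)).map _
      have hid : ev.symm ∘ f.vmap = id := funext ev.symm_apply_apply
      rw [f.ends_eq, Sym2.map_map, hid, Sym2.map_id, id]
    vsurj := ev.symm.surjective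
    esurj := ee.symm.surjective }

lemma vcount_mk {α : Type} [DecidableEq α] (v a b : α) :
    vcount v s(a, b) = (if a = v then 1 else 0) + (if b = v then 1 else 0) := rfl

lemma vcount_map {α β : Type} [DecidableEq α] [DecidableEq β] {f : α → β} (hf : Injective f)
    (v : α) (z : Sym2 α) : vcount (f v) (z.map f) = vcount v z := by
  induction z using Sym2.ind with
  | _ a b => simp [vcount_mk, hf.eq_iff]

namespace Emb

lemma degree_eq_sum_map (f : Emb G H) (v : G.V) :
    G.degree v = ∑ e ∈ Finset.univ.map ⟨f.emap, f.einj⟩, vcount (f.vmap v) (H.ends e) := by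
  rw [Finset.sum_map, MultiGraph.degree]
  exact Finset.sum_congr rfl fun e _ => by
    rw [Function.Embedding.coeFn_mk, f.ends_eq, vcount_map f.vinj]

lemma degree_le (f : Emb G H) (v : G.V) : G.degree v ≤ H.degree (f.vmap v) := by
  rw [f.degree_eq_sum_map]
  exact Finset.sum_le_sum_of_subset (Finset.subset_univ _)

lemma mem_range_emap_of_degree_le (f : Emb G H) {v : G.V}
    (hv : H.degree (f.vmap v) ≤ G.degree v) {e : H.E} (he : vcount (f.vmap v) (H.ends e) ≠ 0) :
    e ∈ Set.range f.emap := by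
  classical
  by_contra hne
  have he' : e ∉ Finset.univ.map ⟨f.emap, f.einj⟩ := by simpa using hne
  have hsum : ∑ e' ∈ insert e (Finset.univ.map ⟨f.emap, f.einj⟩), vcount (f.vmap v) (H.ends e')
      ≤ H.degree (f.vmap v) :=
    Finset.sum_le_sum_of_subset (Finset.subset_univ _)
  rw [Finset.sum_insert he', ← f.degree_eq_sum_map] at hsum
  omega

end Emb

lemma cycle_ends {n : ℕ} [NeZero n] (e : Fin n) : (CycleG n).ends e = s(e, e + 1) := by
  have h : (⟨(e.val + 1) % n, Nat.mod_lt _ e.pos⟩ : Fin n) = e + 1 := by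
    ext
    simp [Fin.val_add]
  exact congrArg (s(e, ·)) h

lemma degree_cycle {n : ℕ} [NeZero n] (v : Fin n) : (CycleG n).degree v = 2 := by
  have h (e : Fin n) : vcount v ((CycleG n).ends e)
      = (if e = v then 1 else 0) + (if e = v - 1 then 1 else 0) := by
    rw [cycle_ends, vcount_mk]
    simp only [← eq_sub_iff_add_eq]
  refine (Finset.sum_congr rfl fun e _ => h e).trans
    (?_ : ∑ e : Fin n, ((if e = v then 1 else 0) + if e = v - 1 then 1 else 0) = 2)
  simp [Finset.sum_add_distrib]

lemma card_eq_of_iso_cycle {a b : ℕ} (f : Iso (CycleG a) (CycleG b)) : a = b :=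
  Fin.equiv_iff_eq.mp ⟨Equiv.ofBijective f.vmap ⟨f.vinj, f.vsurj⟩⟩

open Fin.NatCast in
lemma Fin.mem_of_add_one_mem {m : ℕ} [NeZero m] {s : Set (Fin m)} {a : Fin m} (ha : a ∈ s)
    (hs : ∀ x ∈ s, x + 1 ∈ s) (u : Fin m) : u ∈ s := by
  have hiter (k : ℕ) : a + (k : Fin m) ∈ s := by
    induction k with
    | zero => simpa using ha
    | succ k ih => simpa [Nat.cast_succ, add_assoc] using hs _ ih
  simpa using hiter (u - a).val

lemma Emb.surjective_of_two_le_degree {m : ℕ} (f : Emb G (CycleG m)) (hne : Nonempty G.V)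
    (hdeg : ∀ v, 2 ≤ G.degree v) : Surjective f.vmap ∧ Surjective f.emap := by
  have : NeZero m := ⟨by rintro rfl; exact (f.vmap hne.some).elim0⟩
  have hself (x : Fin m) : vcount x ((CycleG m).ends x) ≠ 0 := by simp [cycle_ends x, vcount_mk]
  have hcov (v : G.V) (e : Fin m) (he : vcount (f.vmap v) ((CycleG m).ends e) ≠ 0) :
      ∃ e', f.emap e' = e :=
    f.mem_range_emap_of_degree_le ((degree_cycle (f.vmap v)).trans_le (hdeg v)) he
  have hstep (x : Fin m) (hx : ∃ v, f.vmap v = x) : ∃ v, f.vmap v = x + 1 := by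
    obtain ⟨v, rfl⟩ := hx
    obtain ⟨e, he⟩ := hcov v (f.vmap v) (hself _)
    have hends := f.ends_eq e
    rw [he, cycle_ends (f.vmap v)] at hends
    exact (Sym2.mem_map.mp (hends ▸ Sym2.mem_mk_right _ _)).imp fun _ => And.right
  have hvsurj : Surjective f.vmap :=
    Fin.mem_of_add_one_mem (s := {x | ∃ v, f.vmap v = x}) ⟨hne.some, rfl⟩ hstep
  refine ⟨hvsurj, fun e => ?_⟩
  obtain ⟨v, hv⟩ := hvsurj e
  exact hcov v e (hv ▸ hself e)

def cycleLengthClass (S : Set ℕ) : Set MultiGraph :=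
  {G | Nonempty G.V ∧ (∀ v, 2 ≤ G.degree v) ∧ ∀ k, Nonempty (Iso (CycleG (k + 1)) G) → k ∈ S}

lemma closedClass_cycleLengthClass (S : Set ℕ) : ClosedClass (cycleLengthClass S) := by
  constructor
  · rintro G H ⟨hne, hdeg, hcyc⟩ f
    refine ⟨⟨f.vmap hne.some⟩, fun w => ?_, fun k ⟨g⟩ => hcyc k ⟨g.trans f.symm⟩⟩
    obtain ⟨v, rfl⟩ := f.vsurj w
    exact (hdeg v).trans (f.degree_le v)
  · rintro G G₁ G₂ Gt ⟨hne₁, hdeg₁, hcyc₁⟩ ⟨-, hdeg₂, -⟩ ⟨-, -, f₁, f₂, -, -, hcovV, -⟩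
    refine ⟨⟨f₁.vmap hne₁.some⟩, fun v => ?_, fun k ⟨g⟩ => ?_⟩
    · rcases hcovV v with ⟨a, rfl⟩ | ⟨b, rfl⟩
      · exact (hdeg₁ a).trans (f₁.degree_le a)
      · exact (hdeg₂ b).trans (f₂.degree_le b)
    · let f := f₁.trans g.symm.toEmb
      obtain ⟨hvsurj, hesurj⟩ := f.surjective_of_two_le_degree hne₁ hdeg₁
      exact hcyc₁ k ⟨(Iso.mk f hvsurj hesurj).symm⟩

lemma cycle_mem_cycleLengthClass_iff (S : Set ℕ) (k : ℕ) :
    CycleG (k + 1) ∈ cycleLengthClass S ↔ k ∈ S := by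
  refine ⟨fun ⟨_, _, hcyc⟩ => hcyc k ⟨Iso.refl _⟩, fun hk => ?_⟩
  refine ⟨⟨(0 : Fin (k + 1))⟩, fun v => (degree_cycle v).ge, fun j ⟨f⟩ => ?_⟩
  rwa [Nat.succ_injective (card_eq_of_iso_cycle f)]

lemma cycleLengthClass_injective : Injective cycleLengthClass := fun S T h => by
  ext k
  rw [← cycle_mem_cycleLengthClass_iff, h, cycle_mem_cycleLengthClass_iff]

lemma continuum_le_mk_closedClass : 𝔠 ≤ #{C : Set MultiGraph // ClosedClass C} := by
  have hinj : Injective fun S : Set ℕ =>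
      (⟨cycleLengthClass S, closedClass_cycleLengthClass S⟩ : {C // ClosedClass C}) :=
    fun S T h => cycleLengthClass_injective (congrArg Subtype.val h)
  simpa using lift_mk_le_lift_mk_of_injective hinj

def decode (c : Σ n m : ℕ, Fin m → Sym2 (Fin n)) : MultiGraph :=
  { V := Fin c.1, E := Fin c.2.1, ends := c.2.2 }

lemma exists_iso_decode (G : MultiGraph) : ∃ c, Nonempty (Iso G (decode c)) := by
  let eV := Fintype.equivFin G.V
  let eE := Fintype.equivFin G.E
  refine ⟨⟨_, _, fun e => (G.ends (eE.symm e)).map eV⟩, ⟨⟨⟨eV, eE, eV.injective, eE.injective,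
    fun e => congrArg (fun e => (G.ends e).map eV) (eE.symm_apply_apply e)⟩, eV.surjective,
    eE.surjective⟩⟩⟩

lemma IsoClosed.mem_iff {C : Set MultiGraph} (hC : IsoClosed C) (f : Iso G H) :
    G ∈ C ↔ H ∈ C :=
  ⟨fun hG => hC G H hG f, fun hH => hC H G hH f.symm⟩

lemma IsoClosed.ext_decode {C D : Set MultiGraph} (hC : IsoClosed C) (hD : IsoClosed D)
    (h : ∀ c, decode c ∈ C ↔ decode c ∈ D) : C = D := by
  ext G
  obtain ⟨c, ⟨f⟩⟩ := exists_iso_decode G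
  rw [hC.mem_iff f, hD.mem_iff f, h]

lemma mk_closedClass_le_continuum : #{C : Set MultiGraph // ClosedClass C} ≤ 𝔠 := by
  have hinj : Injective fun C : {C : Set MultiGraph // ClosedClass C} => decode ⁻¹' C.1 :=
    fun C D h => Subtype.ext <| C.2.1.ext_decode D.2.1 fun c => Set.ext_iff.mp h c
  calc #{C : Set MultiGraph // ClosedClass C}
      ≤ lift #(Set (Σ n m : ℕ, Fin m → Sym2 (Fin n))) := by
        simpa using lift_mk_le_lift_mk_of_injective hinj
    _ ≤ 𝔠 := by
        rw [lift_le_continuum, mk_set, ← two_power_aleph0]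
        exact power_le_power_left two_ne_zero mk_le_aleph0

/-- The set of all closed classes of graphs has the cardinality of the continuum. -/
theorem closedClasses_continuum :
    Cardinal.mk {C : Set MultiGraph // ClosedClass C} = Cardinal.continuum :=
  mk_closedClass_le_continuum.antisymm continuum_le_mk_closedClass
end

section
/- If G₁ and G₂ are Hamiltonian graphs and G is obtained from them by a gluing operation in which the identified subgraph of at least one operand contains all of that operand's vertices, then G is Hamiltonian. -/
/-- Composition of embeddings. -/
def Emb.comp {A B C : MultiGraph} (f : Emb A B) (g : Emb B C) : Emb A C where
  vmap := g.vmap ∘ f.vmap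
  emap := g.emap ∘ f.emap
  vinj := g.vinj.comp f.vinj
  einj := g.einj.comp f.einj
  ends_eq := fun e => by
    simp [Function.comp, g.ends_eq, f.ends_eq, Sym2.map_map]

/-- If one operand's Hamiltonian cycle spans the glued graph via a surjective
embedding, we get a Hamiltonian cycle of `G`. -/
lemma hamiltonian_of_surj {G₂ G : MultiGraph} (f₂ : Emb G₂ G)
    (h₂ : Hamiltonian G₂) (hs : Function.Surjective f₂.vmap) : Hamiltonian G := by
  obtain ⟨n, hn, c, hc⟩ := h₂
  exact ⟨n, hn, c.comp f₂, (hs.comp hc)⟩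

/-- If `G₁`, `G₂` are Hamiltonian and `G` is a gluing of them in which the
identified subgraph of at least one operand contains all of that operand's
vertices, then `G` is Hamiltonian. -/
theorem hamiltonian_glue_spanning (G G₁ G₂ Gt : MultiGraph)
    (j₁ : Emb Gt G₁) (j₂ : Emb Gt G₂) (f₁ : Emb G₁ G) (f₂ : Emb G₂ G)
    (h : GlueAt G G₁ G₂ Gt j₁ j₂ f₁ f₂)
    (h₁ : Hamiltonian G₁) (h₂ : Hamiltonian G₂)
    (hfull : Function.Surjective j₁.vmap ∨ Function.Surjective j₂.vmap) :
    Hamiltonian G := by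
  obtain ⟨hv, he, hcov, hecov, hsep, hesep⟩ := h
  rcases hfull with hs | hs
  · -- every vertex of G is in the image of f₂
    apply hamiltonian_of_surj f₂ h₂
    intro v
    rcases hcov v with ⟨a, ha⟩ | ⟨b, hb⟩
    · obtain ⟨x, hx⟩ := hs a
      exact ⟨j₂.vmap x, by rw [← hv x, hx, ha]⟩
    · exact ⟨b, hb⟩
  · apply hamiltonian_of_surj f₁ h₁
    intro v
    rcases hcov v with ⟨a, ha⟩ | ⟨b, hb⟩
    · exact ⟨a, ha⟩
    · obtain ⟨x, hx⟩ := hs b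
      exact ⟨j₁.vmap x, by rw [hv x, hx, hb]⟩
end
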